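/- arXiv:2404.10495 — 2 statements merged into one kernel-verified Lean document; each statement's English description precedes it below -/
import Mathlib

section
/- If Q_τ(Y|A,L) = β_τ(L)·A + ω_τ(L) for measurable functions β_τ and ω_τ of L, then Ψ_τ = E[(A−E(A|L))(Q_τ(Y|A,L)−E(Q_τ(Y|A,L)|L))]/E[(A−E(A|L))²] equals E[Var(A|L)·β_τ(L)] / E[Var(A|L)]. -/
open MeasureTheory ProbabilityTheory Filter

lemma memLp_two_condexp {Ω : Type*} {m m0 : MeasurableSpace Ω} (hm : m ≤ m0)
    (μ : Measure Ω) [IsFiniteMeasure μ] {A : Ω → ℝ} (hA2 : MemLp A 2 μ) :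
    MemLp (μ[A|m]) 2 μ := by
  haveI : SigmaFinite (μ.trim hm) := inferInstance
  have hA1 : Integrable A μ := hA2.integrable one_le_two
  let g1 : Ω →₂[μ] ℝ := ((condExpL2 ℝ ℝ hm (hA2.toLp A) : lpMeas ℝ ℝ m 2 μ) : Ω →₂[μ] ℝ)
  set g : Ω → ℝ := ⇑g1 with hg
  have hgmem : MemLp g 2 μ := Lp.memLp g1
  have hgint : Integrable g μ := hgmem.integrable one_le_two
  have heq : g =ᵐ[μ] μ[A|m] := by
    refine ae_eq_condExp_of_forall_setIntegral_eq hm hA1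
      (fun s _ _ => hgint.integrableOn) (fun s hs hμs => ?_) ?_
    · rw [show (∫ x in s, g x ∂μ) = ∫ x in s, (condExpL2 ℝ ℝ hm (hA2.toLp A) : Ω → ℝ) x ∂μ from rfl,
        integral_condExpL2_eq hm (hA2.toLp A) hs hμs.ne]
      exact setIntegral_congr_ae (hm s hs) ((hA2.coeFn_toLp).mono fun x hx _ => hx)
    · exact aestronglyMeasurable_condExpL2 hm _
  exact hgmem.ae_eq heq

/-- If `Q_τ(Y|A,L) = β_τ(L)·A + ω_τ(L)` for measurable functions `β_τ` and `ω_τ`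
of `L`, then `Ψ_τ = E[(A−E(A|L))(Q−E(Q|L))]/E[(A−E(A|L))²]` equals
`E[Var(A|L)·β_τ(L)] / E[Var(A|L)]`, where `Var(A|L) = E[(A−E(A|L))²|L]`. -/
theorem stmt4 {Ω β' : Type*} [MeasurableSpace Ω] [StandardBorelSpace Ω] [Nonempty Ω]
    [MeasurableSpace β'] (μ : Measure Ω) [IsProbabilityMeasure μ]
    (A : Ω → ℝ) (L : Ω → β')
    (hA : Measurable A) (hL : Measurable L)
    (q : ℝ → β' → ℝ) (βτ ωτ : β' → ℝ)
    (hβ : Measurable βτ) (hω : Measurable ωτ)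
    -- the model with L-dependent coefficient
    (hmodel : ∀ a l, q a l = βτ l * a + ωτ l)
    -- finite moments
    (hA2 : MemLp A 2 μ)
    (hq2 : MemLp (fun ω => q (A ω) (L ω)) 2 μ)
    (hVβ : Integrable (fun ω =>
      (μ[fun ω' => (A ω' - (μ[A | MeasurableSpace.comap L inferInstance]) ω') ^ 2 |
          MeasurableSpace.comap L inferInstance]) ω * βτ (L ω)) μ)
    (hpos : 0 < ∫ ω, (μ[fun ω' => (A ω' - (μ[A | MeasurableSpace.comap L inferInstance]) ω') ^ 2 |
          MeasurableSpace.comap L inferInstance]) ω ∂μ) :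
    (∫ ω, (A ω - (μ[A | MeasurableSpace.comap L inferInstance]) ω)
        * (q (A ω) (L ω)
            - (μ[fun ω' => q (A ω') (L ω') | MeasurableSpace.comap L inferInstance]) ω) ∂μ)
      / (∫ ω, (A ω - (μ[A | MeasurableSpace.comap L inferInstance]) ω) ^ 2 ∂μ)
    = (∫ ω, (μ[fun ω' => (A ω' - (μ[A | MeasurableSpace.comap L inferInstance]) ω') ^ 2 |
          MeasurableSpace.comap L inferInstance]) ω * βτ (L ω) ∂μ)
      / (∫ ω, (μ[fun ω' => (A ω' - (μ[A | MeasurableSpace.comap L inferInstance]) ω') ^ 2 |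
          MeasurableSpace.comap L inferInstance]) ω ∂μ) := by
  have hm := hL.comap_le
  have hBm0 : Measurable fun ω => βτ (L ω) := hβ.comp hL
  have hBn0 : ∀ s : Set Ω, MeasurableSet s →
      AEStronglyMeasurable (s.indicator fun ω => βτ (L ω)) μ := fun s hs =>
    (hBm0.indicator hs).aestronglyMeasurable
  have hBn0abs : ∀ s : Set Ω, MeasurableSet s →
      AEStronglyMeasurable (fun ω => |s.indicator (fun ω' => βτ (L ω')) ω|) μ := fun s hs =>
    ((hBm0.indicator hs).abs).aestronglyMeasurable
  have hBmae : AEStronglyMeasurable (fun ω => βτ (L ω)) μ := hBm0.aestronglyMeasurable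
  have hind : ∀ g : Ω → ℝ, Integrable g μ → ∀ s : Set Ω, MeasurableSet s →
      Integrable (s.indicator g) μ := fun g hg s hs => hg.indicator hs
  set m := MeasurableSpace.comap L inferInstance with hmdef
  haveI : SigmaFinite (μ.trim hm) := inferInstance
  set Ab := μ[A|m] with hAbdef
  set f : Ω → ℝ := fun ω => (A ω - Ab ω) ^ 2 with hfdef
  set V := μ[f|m] with hVdef
  set Q : Ω → ℝ := fun ω => q (A ω) (L ω) with hQdef
  -- basic measurability
  have hLm : Measurable[m] L := Measurable.of_comap_le le_rfl
  have hBm : Measurable[m] fun ω => βτ (L ω) := hβ.comp hLm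
  have hWm : Measurable[m] fun ω => ωτ (L ω) := hω.comp hLm
  have hA1 : Integrable A μ := hA2.integrable one_le_two
  have hQ1 : Integrable Q μ := hq2.integrable one_le_two
  -- truncation sets
  set E : ℕ → Set Ω := fun n => {ω | |βτ (L ω)| ≤ (n : ℝ)} with hEdef
  have hEmeas : ∀ n, MeasurableSet[m] (E n) := fun n =>
    measurableSet_le hBm.abs measurable_const
  set Bn : ℕ → Ω → ℝ := fun n => (E n).indicator fun ω => βτ (L ω) with hBndef
  have hBnm : ∀ n, Measurable[m] (Bn n) := fun n => hBm.indicator (hEmeas n)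
  have hBn_bd : ∀ n x, ‖Bn n x‖ ≤ (n : ℝ) := by
    intro n x
    by_cases hx : x ∈ E n
    · have hx' : |βτ (L x)| ≤ (n : ℝ) := hx
      simpa [Bn, Set.indicator_of_mem hx] using hx'
    · simp [Bn, Set.indicator_of_notMem hx]
  have hBn_le : ∀ n x, |Bn n x| ≤ |βτ (L x)| := by
    intro n x
    by_cases hx : x ∈ E n
    · simp [Bn, Set.indicator_of_mem hx]
    · simp [Bn, Set.indicator_of_notMem hx, abs_nonneg]
  have hBn_tendsto : ∀ x, ∀ᶠ n in atTop, Bn n x = βτ (L x) := by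
    intro x
    filter_upwards [eventually_ge_atTop ⌈|βτ (L x)|⌉₊] with n hn
    have hx : |βτ (L x)| ≤ (n : ℝ) := le_trans (Nat.le_ceil _) (Nat.cast_le.mpr hn)
    have : x ∈ E n := hx
    simp [Bn, Set.indicator_of_mem this]
  -- Step A: conditional expectation of Q
  have key : ∀ n : ℕ, ∀ᵐ ω ∂μ, ω ∈ E n →
      (μ[Q|m]) ω = βτ (L ω) * Ab ω + ωτ (L ω) := by
    intro n
    have hBnA : Integrable (fun ω => Bn n ω * A ω) μ :=
      hA1.bdd_mul (hBn0 _ (hm _ (hEmeas n))) (Filter.Eventually.of_forall (hBn_bd n))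
    have hQind : Integrable ((E n).indicator Q) μ := hind Q hQ1 _ (hm _ (hEmeas n))
    have hWnfun : (E n).indicator (fun ω => ωτ (L ω))
        = fun ω => (E n).indicator Q ω - Bn n ω * A ω := by
      funext ω
      by_cases h : ω ∈ E n
      · simp only [Set.indicator_of_mem h, Bn, Q, hmodel]; ring
      · simp [Set.indicator_of_notMem h, Bn]
    have hWn : Integrable ((E n).indicator fun ω => ωτ (L ω)) μ := by
      rw [hWnfun]; exact hQind.sub hBnA
    have hsplit : (E n).indicator Q
        = (fun ω => Bn n ω * A ω) + (E n).indicator fun ω => ωτ (L ω) := by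
      funext ω
      by_cases h : ω ∈ E n
      · simp only [Pi.add_apply, Set.indicator_of_mem h, Bn, Q, hmodel]
      · simp [Set.indicator_of_notMem h, Bn]
    have h2 : μ[(E n).indicator Q|m]
        =ᵐ[μ] fun ω => Bn n ω * Ab ω + (E n).indicator (fun ω => ωτ (L ω)) ω := by
      rw [hsplit]
      refine (condExp_add hBnA hWn m).trans ?_
      have hmul : μ[fun ω => Bn n ω * A ω|m] =ᵐ[μ] fun ω => Bn n ω * Ab ω :=
        condExp_mul_of_stronglyMeasurable_left ((hBnm n).stronglyMeasurable) hBnA hA1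
      have hcw : μ[(E n).indicator fun ω => ωτ (L ω)|m]
          = (E n).indicator fun ω => ωτ (L ω) :=
        condExp_of_stronglyMeasurable hm
          ((hWm.stronglyMeasurable).indicator (hEmeas n)) hWn
      filter_upwards [hmul] with ω hω
      simp only [Pi.add_apply, hω, hcw]
    have h1 : μ[(E n).indicator Q|m] =ᵐ[μ] (E n).indicator (μ[Q|m]) :=
      condExp_indicator hQ1 (hEmeas n)
    filter_upwards [h1, h2] with ω hω1 hω2 hmem
    have := hω1.symm.trans hω2
    rw [Set.indicator_of_mem hmem] at this
    rw [this, Set.indicator_of_mem hmem]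
    simp only [Bn, Set.indicator_of_mem hmem]
  have hQg : (μ[Q|m]) =ᵐ[μ] fun ω => βτ (L ω) * Ab ω + ωτ (L ω) := by
    filter_upwards [ae_all_iff.mpr key] with ω hω
    have hx : |βτ (L ω)| ≤ ((⌈|βτ (L ω)|⌉₊ : ℕ) : ℝ) := Nat.le_ceil _
    exact hω ⌈|βτ (L ω)|⌉₊ hx
  -- numerator rewrite
  have hnum1 : (∫ ω, (A ω - Ab ω) * (Q ω - (μ[Q|m]) ω) ∂μ)
      = ∫ ω, βτ (L ω) * f ω ∂μ := by
    refine integral_congr_ae ?_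
    filter_upwards [hQg] with ω hω
    rw [hω]
    simp only [Q, hmodel, f]
    ring
  -- integrability of f
  have hAb2 : MemLp Ab 2 μ := memLp_two_condexp hm μ hA2
  have hfint : Integrable f μ := (hA2.sub hAb2).integrable_sq
  have hfnn : ∀ ω, 0 ≤ f ω := fun ω => sq_nonneg _
  have hVnn : 0 ≤ᵐ[μ] V := condExp_nonneg (Filter.Eventually.of_forall hfnn)
  -- pull-out for truncated coefficients
  have hBnf_int : ∀ n, Integrable (fun ω => Bn n ω * f ω) μ := fun n =>
    hfint.bdd_mul (hBn0 _ (hm _ (hEmeas n))) (Filter.Eventually.of_forall (hBn_bd n))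
  have hint_n : ∀ n, ∫ ω, Bn n ω * f ω ∂μ = ∫ ω, Bn n ω * V ω ∂μ := by
    intro n
    have hpull : μ[fun ω => Bn n ω * f ω|m] =ᵐ[μ] fun ω => Bn n ω * V ω :=
      condExp_mul_of_stronglyMeasurable_left ((hBnm n).stronglyMeasurable) (hBnf_int n) hfint
    rw [← integral_condExp hm (f := fun ω => Bn n ω * f ω)]
    exact integral_congr_ae hpull
  have hCnf_int : ∀ n, Integrable (fun ω => |Bn n ω| * f ω) μ := fun n =>
    hfint.bdd_mul ((hBnm n).abs.mono hm le_rfl).aestronglyMeasurable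
      (c := n) (Filter.Eventually.of_forall fun x => by simpa using hBn_bd n x)
  have hCnV_int : ∀ n, Integrable (fun ω => |Bn n ω| * V ω) μ := fun n =>
    integrable_condExp.bdd_mul ((hBnm n).abs.mono hm le_rfl).aestronglyMeasurable
      (c := n) (Filter.Eventually.of_forall fun x => by simpa using hBn_bd n x)
  have habs_n : ∀ n, ∫ ω, |Bn n ω| * f ω ∂μ = ∫ ω, |Bn n ω| * V ω ∂μ := by
    intro n
    have hpull : μ[fun ω => |Bn n ω| * f ω|m] =ᵐ[μ] fun ω => |Bn n ω| * V ω :=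
      condExp_mul_of_stronglyMeasurable_left ((hBnm n).abs.stronglyMeasurable) (hCnf_int n) hfint
    rw [← integral_condExp hm (f := fun ω => |Bn n ω| * f ω)]
    exact integral_congr_ae hpull
  -- integrable dominating function on the V side
  have hVβabs : Integrable (fun ω => |βτ (L ω)| * V ω) μ := by
    refine hVβ.abs.congr ?_
    filter_upwards [hVnn] with ω hω
    simp only [abs_mul, abs_of_nonneg hω]; ring
  have hbound_n : ∀ n, ∫ ω, |Bn n ω| * f ω ∂μ ≤ ∫ ω, |βτ (L ω)| * V ω ∂μ := by
    intro n
    rw [habs_n n]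
    refine integral_mono_ae (hCnV_int n) hVβabs ?_
    filter_upwards [hVnn] with ω hω
    exact mul_le_mul_of_nonneg_right (hBn_le n ω) hω
  -- integrability of β(L) * f
  have hBf_meas :=
    hBmae.mul hfint.1
  have hBf_int : Integrable (fun ω => βτ (L ω) * f ω) μ := by
    refine ⟨hBf_meas, ?_⟩
    rw [hasFiniteIntegral_iff_norm]
    have hnorm : ∀ ω, ENNReal.ofReal ‖βτ (L ω) * f ω‖
        = ENNReal.ofReal (|βτ (L ω)| * f ω) := by
      intro ω
      rw [Real.norm_eq_abs, abs_mul, abs_of_nonneg (hfnn ω)]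
    calc ∫⁻ ω, ENNReal.ofReal ‖βτ (L ω) * f ω‖ ∂μ
        = ∫⁻ ω, ⨆ n, ENNReal.ofReal (|Bn n ω| * f ω) ∂μ := by
          refine lintegral_congr fun ω => ?_
          rw [hnorm ω]
          have hmono : Monotone fun n => ENNReal.ofReal (|Bn n ω| * f ω) := by
            intro a b hab
            refine ENNReal.ofReal_le_ofReal (mul_le_mul_of_nonneg_right ?_ (hfnn ω))
            by_cases ha : ω ∈ E a
            · have ha' : |βτ (L ω)| ≤ (a : ℝ) := ha
              have hb : ω ∈ E b :=
                show |βτ (L ω)| ≤ (b : ℝ) from le_trans ha' (Nat.cast_le.mpr hab)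
              simp [Bn, Set.indicator_of_mem, ha, hb]
            · simp [Bn, Set.indicator_of_notMem ha, abs_nonneg]
          have hlim : Tendsto (fun n => ENNReal.ofReal (|Bn n ω| * f ω)) atTop
              (nhds (ENNReal.ofReal (|βτ (L ω)| * f ω))) := by
            refine Tendsto.congr' ?_ tendsto_const_nhds
            filter_upwards [hBn_tendsto ω] with n hn
            rw [hn]
          exact (tendsto_nhds_unique (tendsto_atTop_iSup hmono) hlim).symm
      _ = ⨆ n, ∫⁻ ω, ENNReal.ofReal (|Bn n ω| * f ω) ∂μ := by
          refine lintegral_iSup' (fun n => ?_) ?_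
          · exact (ENNReal.measurable_ofReal.comp_aemeasurable
              (((hCnf_int n).1.aemeasurable)))
          · refine Filter.Eventually.of_forall fun ω => ?_
            intro a b hab
            refine ENNReal.ofReal_le_ofReal (mul_le_mul_of_nonneg_right ?_ (hfnn ω))
            by_cases ha : ω ∈ E a
            · have ha' : |βτ (L ω)| ≤ (a : ℝ) := ha
              have hb : ω ∈ E b :=
                show |βτ (L ω)| ≤ (b : ℝ) from le_trans ha' (Nat.cast_le.mpr hab)
              simp [Bn, Set.indicator_of_mem, ha, hb]
            · simp [Bn, Set.indicator_of_notMem ha, abs_nonneg]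
      _ ≤ ENNReal.ofReal (∫ ω, |βτ (L ω)| * V ω ∂μ) := by
          refine iSup_le fun n => ?_
          rw [← ofReal_integral_eq_lintegral_ofReal (hCnf_int n)
            (Filter.Eventually.of_forall fun ω => mul_nonneg (abs_nonneg _) (hfnn ω))]
          exact ENNReal.ofReal_le_ofReal (hbound_n n)
      _ < ⊤ := ENNReal.ofReal_lt_top
  -- Step C : ∫ β f = ∫ β V
  have hC : ∫ ω, βτ (L ω) * f ω ∂μ = ∫ ω, βτ (L ω) * V ω ∂μ := by
    have t1 : Tendsto (fun n => ∫ ω, Bn n ω * f ω ∂μ) atTop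
        (nhds (∫ ω, βτ (L ω) * f ω ∂μ)) := by
      refine tendsto_integral_of_dominated_convergence (fun ω => |βτ (L ω)| * f ω)
        (fun n => (hBnf_int n).1) ?_ ?_ ?_
      · exact hBf_int.abs.congr (Filter.Eventually.of_forall fun ω => by
          simp only [abs_mul, abs_of_nonneg (hfnn ω)])
      · intro n
        refine Filter.Eventually.of_forall fun ω => ?_
        rw [Real.norm_eq_abs, abs_mul, abs_of_nonneg (hfnn ω)]
        exact mul_le_mul_of_nonneg_right (hBn_le n ω) (hfnn ω)
      · refine Filter.Eventually.of_forall fun ω => ?_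
        refine Tendsto.congr' ?_ tendsto_const_nhds
        filter_upwards [hBn_tendsto ω] with n hn
        rw [hn]
    have t2 : Tendsto (fun n => ∫ ω, Bn n ω * V ω ∂μ) atTop
        (nhds (∫ ω, βτ (L ω) * V ω ∂μ)) := by
      refine tendsto_integral_of_dominated_convergence (fun ω => |βτ (L ω)| * |V ω|)
        (fun n => (hBm0.indicator (hm _ (hEmeas n))).aestronglyMeasurable |>.mul integrable_condExp.1) ?_ ?_ ?_
      · refine hVβ.abs.congr (Filter.Eventually.of_forall fun ω => ?_)
        simp only [abs_mul]; ring
      · intro n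
        refine Filter.Eventually.of_forall fun ω => ?_
        rw [Real.norm_eq_abs, abs_mul]
        exact mul_le_mul_of_nonneg_right (hBn_le n ω) (abs_nonneg _)
      · refine Filter.Eventually.of_forall fun ω => ?_
        refine Tendsto.congr' ?_ tendsto_const_nhds
        filter_upwards [hBn_tendsto ω] with n hn
        rw [hn]
    have := funext hint_n
    rw [this] at t1
    exact tendsto_nhds_unique t1 t2
  -- Step D : denominator
  have hD : ∫ ω, f ω ∂μ = ∫ ω, V ω ∂μ := (integral_condExp hm).symm
  -- assemble
  calc (∫ ω, (A ω - Ab ω) * (Q ω - (μ[Q|m]) ω) ∂μ) / ∫ ω, f ω ∂μ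
      = (∫ ω, βτ (L ω) * V ω ∂μ) / ∫ ω, V ω ∂μ := by rw [hnum1, hC, hD]
    _ = (∫ ω, V ω * βτ (L ω) ∂μ) / ∫ ω, V ω ∂μ := by
        congr 1
        exact integral_congr_ae (Filter.Eventually.of_forall fun ω => mul_comm _ _)
end

section
/- The efficient influence function φ(Y,A,L) = (A−E(A|L))/E[(A−E(A|L))²] · [ q(A,L) − E(q(A,L)|L) + (τ − 1{Y ≤ q(A,L)})/f(q(A,L)|A,L) − Ψ_τ·(A−E(A|L)) ] has mean zero, where q(A,L) = Q_τ(Y|A,L) and Ψ_τ = E[(A−E(A|L))(q(A,L)−E(q(A,L)|L))]/E[(A−E(A|L))²]. -/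
open MeasureTheory ProbabilityTheory

lemma aux_key {Ω : Type*} {m0 : MeasurableSpace Ω} (μ : Measure Ω) [IsProbabilityMeasure μ]
    {m' : MeasurableSpace Ω} (hle : m' ≤ m0) (g I : Ω → ℝ) (τ : ℝ)
    (hgsm : StronglyMeasurable[m'] g)
    (hIint : Integrable I μ) (hgI : Integrable (fun ω => g ω * I ω) μ)
    (hquant : μ[I | m'] =ᵐ[μ] fun _ => τ) :
    ∫ ω, g ω * I ω ∂μ = τ * ∫ ω, g ω ∂μ := by
  have h1 : μ[fun ω => g ω * I ω | m'] =ᵐ[μ] fun ω => g ω * τ := by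
    have h2 := condExp_mul_of_stronglyMeasurable_left (m := m') (μ := μ) hgsm
      (hgI.congr (Filter.Eventually.of_forall fun ω => rfl)) hIint
    refine (condExp_congr_ae (Filter.Eventually.of_forall fun ω => rfl)).trans (h2.trans ?_)
    filter_upwards [hquant] with ω hω
    simp only [Pi.mul_apply, hω]
  calc ∫ ω, g ω * I ω ∂μ = ∫ ω, (μ[fun ω => g ω * I ω | m']) ω ∂μ :=
        (integral_condExp hle).symm
    _ = ∫ ω, g ω * τ ∂μ := integral_congr_ae h1
    _ = τ * ∫ ω, g ω ∂μ := by rw [integral_mul_const]; ring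

/-- The efficient influence function
`φ(Y,A,L) = (A−E(A|L))/E[(A−E(A|L))²]·[q(A,L) − E(q(A,L)|L) + (τ−1{Y≤q(A,L)})/f(q(A,L)|A,L)
− Ψ_τ·(A−E(A|L))]` has mean zero, where `q(A,L) = Q_τ(Y|A,L)` and
`Ψ_τ = E[(A−E(A|L))(q(A,L)−E(q(A,L)|L))]/E[(A−E(A|L))²]`. -/
theorem stmt9 {Ω α β' : Type*} [MeasurableSpace Ω]
    [MeasurableSpace α] [MeasurableSpace β'] (μ : Measure Ω) [IsProbabilityMeasure μ]
    (Y : Ω → ℝ) (A : Ω → ℝ) (L : Ω → β')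
    (hY : Measurable Y) (hA : Measurable A) (hL : Measurable L)
    (τ : ℝ) (hτ : τ ∈ Set.Ioo (0 : ℝ) 1)
    -- m = E(A|L), the conditional mean of A given L
    (m : Ω → ℝ) (hm : m = μ[A | MeasurableSpace.comap L inferInstance])
    -- ζ = q(A,L) = Q_τ(Y|A,L), a σ(A,L)-measurable conditional quantile:
    (ζ : Ω → ℝ)
    (hζ : Measurable[MeasurableSpace.comap (fun ω => (A ω, L ω)) inferInstance] ζ)
    (hquant : μ[fun ω => (if Y ω ≤ ζ ω then (1 : ℝ) else 0) |
        MeasurableSpace.comap (fun ω => (A ω, L ω)) inferInstance]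
      =ᵐ[μ] fun _ => τ)
    -- Eq = E(q(A,L)|L)
    (Eq : Ω → ℝ) (hEq : Eq = μ[ζ | MeasurableSpace.comap L inferInstance])
    -- f = f(q(A,L)|A,L), the conditional density evaluated at the quantile,
    -- positive and σ(A,L)-measurable
    (f : Ω → ℝ)
    (hf : Measurable[MeasurableSpace.comap (fun ω => (A ω, L ω)) inferInstance] f)
    (hfpos : ∀ ω, 0 < f ω)
    -- all relevant moments finite
    (hA2 : MemLp A 2 μ) (hζ2 : MemLp ζ 2 μ)
    (hintf : Integrable (fun ω => (A ω - m ω) / f ω) μ)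
    (hintφ : Integrable (fun ω => (A ω - m ω)
      * (ζ ω - Eq ω + (τ - if Y ω ≤ ζ ω then (1 : ℝ) else 0) / f ω)) μ)
    -- D = E[(A−E(A|L))²] > 0 and Ψ_τ
    (D : ℝ) (hD : D = ∫ ω, (A ω - m ω) ^ 2 ∂μ) (hDpos : 0 < D)
    (Ψ : ℝ) (hΨ : Ψ = (∫ ω, (A ω - m ω) * (ζ ω - Eq ω) ∂μ) / D) :
    ∫ ω, (A ω - m ω) / D
        * (ζ ω - Eq ω + (τ - if Y ω ≤ ζ ω then (1 : ℝ) else 0) / f ω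
            - Ψ * (A ω - m ω)) ∂μ = 0 := by
  have hle : MeasurableSpace.comap (fun ω => (A ω, L ω)) inferInstance
      ≤ ‹MeasurableSpace Ω› := (hA.prodMk hL).comap_le
  have hLle : MeasurableSpace.comap L inferInstance
      ≤ MeasurableSpace.comap (fun ω => (A ω, L ω)) inferInstance := by
    have h : L = Prod.snd ∘ (fun ω => (A ω, L ω)) := rfl
    rw [h, ← MeasurableSpace.comap_comp]
    exact MeasurableSpace.comap_mono measurable_snd.comap_le
  -- measurability
  have hζ' : Measurable ζ := hζ.mono hle le_rfl
  have hImeas : Measurable (fun ω => if Y ω ≤ ζ ω then (1 : ℝ) else 0) :=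
    Measurable.ite (measurableSet_le hY hζ') measurable_const measurable_const
  have hIbd : ∀ ω, ‖if Y ω ≤ ζ ω then (1 : ℝ) else 0‖ ≤ 1 := by
    intro ω; split <;> simp
  have hIint : Integrable (fun ω => if Y ω ≤ ζ ω then (1 : ℝ) else 0) μ := by
    refine Integrable.mono' (integrable_const (1 : ℝ)) hImeas.aestronglyMeasurable ?_
    exact Filter.Eventually.of_forall hIbd
  have hApair : Measurable[MeasurableSpace.comap (fun ω => (A ω, L ω)) inferInstance]
      (fun ω => (A ω, L ω)) := measurable_iff_comap_le.mpr le_rfl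
  have hAm : Measurable[MeasurableSpace.comap (fun ω => (A ω, L ω)) inferInstance] A :=
    measurable_fst.comp hApair
  have hmm : Measurable[MeasurableSpace.comap (fun ω => (A ω, L ω)) inferInstance] m := by
    rw [hm]
    exact (stronglyMeasurable_condExp.mono hLle).measurable
  have hgsm : StronglyMeasurable[MeasurableSpace.comap (fun ω => (A ω, L ω)) inferInstance]
      (fun ω => (A ω - m ω) / f ω) := ((hAm.sub hmm).div hf).stronglyMeasurable
  -- integrability of g * I
  have hgI : Integrable
      (fun ω => (A ω - m ω) / f ω * (if Y ω ≤ ζ ω then (1 : ℝ) else 0)) μ := by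
    have h := hintf.bdd_mul (f := fun ω => if Y ω ≤ ζ ω then (1 : ℝ) else 0)
      hImeas.aestronglyMeasurable (Filter.Eventually.of_forall hIbd)
    exact h.congr (Filter.Eventually.of_forall fun ω => mul_comm _ _)
  -- key: ∫ g * I = τ * ∫ g
  have key : ∫ ω, (A ω - m ω) / f ω * (if Y ω ≤ ζ ω then (1 : ℝ) else 0) ∂μ
      = τ * ∫ ω, (A ω - m ω) / f ω ∂μ :=
    aux_key μ hle _ _ τ hgsm hIint hgI hquant
  -- ∫ g * (τ - I) = 0
  have hgτI : Integrable
      (fun ω => (A ω - m ω) / f ω * (τ - if Y ω ≤ ζ ω then (1 : ℝ) else 0)) μ := by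
    have h : (fun ω => (A ω - m ω) / f ω * (τ - if Y ω ≤ ζ ω then (1 : ℝ) else 0))
        = fun ω => τ * ((A ω - m ω) / f ω)
          - (A ω - m ω) / f ω * (if Y ω ≤ ζ ω then (1 : ℝ) else 0) := by
      funext ω; ring
    rw [h]
    exact (hintf.const_mul τ).sub hgI
  have hzero : ∫ ω, (A ω - m ω) / f ω * (τ - if Y ω ≤ ζ ω then (1 : ℝ) else 0) ∂μ = 0 := by
    have h : (fun ω => (A ω - m ω) / f ω * (τ - if Y ω ≤ ζ ω then (1 : ℝ) else 0))
        = fun ω => τ * ((A ω - m ω) / f ω)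
          - (A ω - m ω) / f ω * (if Y ω ≤ ζ ω then (1 : ℝ) else 0) := by
      funext ω; ring
    rw [h, integral_sub (hintf.const_mul τ) hgI, integral_const_mul, key, sub_self]
  -- ∫ (A-m)(ζ-Eq) = ∫ hintφ integrand
  have hcrossval : ∫ ω, (A ω - m ω) * (ζ ω - Eq ω) ∂μ
      = ∫ ω, (A ω - m ω) * (ζ ω - Eq ω
          + (τ - if Y ω ≤ ζ ω then (1 : ℝ) else 0) / f ω) ∂μ := by
    have heq : (fun ω => (A ω - m ω) * (ζ ω - Eq ω))
        = fun ω => (A ω - m ω) * (ζ ω - Eq ω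
            + (τ - if Y ω ≤ ζ ω then (1 : ℝ) else 0) / f ω)
          - (A ω - m ω) / f ω * (τ - if Y ω ≤ ζ ω then (1 : ℝ) else 0) := by
      funext ω; ring
    rw [heq, integral_sub hintφ hgτI, hzero, sub_zero]
  -- integrability of (A-m)^2
  have hsq : Integrable (fun ω => (A ω - m ω) ^ 2) μ := by
    by_contra h
    rw [integral_undef h] at hD
    exact absurd hD (by linarith)
  -- final computation
  have heq2 : (fun ω => (A ω - m ω) / D
        * (ζ ω - Eq ω + (τ - if Y ω ≤ ζ ω then (1 : ℝ) else 0) / f ω - Ψ * (A ω - m ω)))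
      = fun ω => D⁻¹ * ((A ω - m ω) * (ζ ω - Eq ω
          + (τ - if Y ω ≤ ζ ω then (1 : ℝ) else 0) / f ω) - Ψ * (A ω - m ω) ^ 2) := by
    funext ω; ring
  rw [heq2, integral_const_mul, integral_sub hintφ (hsq.const_mul Ψ), integral_const_mul,
    ← hcrossval, ← hD, hΨ, div_mul_cancel₀ _ (ne_of_gt hDpos), sub_self, mul_zero]
end
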